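/- arXiv:2403.08975 — 3 statements merged into one kernel-verified Lean document; each statement's English description precedes it below -/
import Mathlib

section
/- Let V satisfy Assumption (A), let C₀ > 0 satisfy V(x) ≥ −C₀ + 1 on ℝⁿ, let ω ⊂ ℝⁿ ∖ B₂₀ be a bounded domain, set K = ‖V‖_{L^∞(ω)} + ‖DV‖_{L^∞(ω)} and τ₀ = √(5C₀ + 4K). For φ = Σ_{λ_k ≤ λ} α_k φ_k ∈ Ran(P_λ(H)) define the complex-valued function Φ(x, s, t, y) = Σ_{λ_k ≤ λ} α_k φ_k(x) S_{λ_k}(s) e^{i 2 (K + C₀)^{1/2} t} e^{τ₀ y} on ℝ^{n+3}. Then Φ satisfies div(A∇Φ) = 0 in ℝ^{n+3}, where A(x, s, t, y) is the diagonal matrix with blocks I_{n×n}, 1, (V(x) + 5C₀ + 4K)/(4(K + C₀)), 1; moreover on the hyperplane {s = 0}, the gradient is ∇Φ(x, 0, t, y) = (0, φ̂(x, t, y), 0, 0), where the nonzero entry is the s-component and φ̂(x, t, y) = e^{i 2 (K + C₀)^{1/2} t} e^{τ₀ y} φ(x). -/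
open MeasureTheory Real Set Filter

noncomputable section

/-- The pointwise Laplacian of `f : ℝⁿ → ℝ`, written with iterated Fréchet derivatives. -/
def lapl {n : ℕ} (f : EuclideanSpace ℝ (Fin n) → ℝ) (x : EuclideanSpace ℝ (Fin n)) : ℝ :=
  ∑ i : Fin n,
    fderiv ℝ (fun y => fderiv ℝ f y (EuclideanSpace.single i 1)) x (EuclideanSpace.single i 1)

/-- Assumption (A): `V` is locally bounded, locally Lipschitz away from the ball `B_R`,
bounded below by `c₁|x|^{β₁} − C⁰`, and `|V| + |DV| ≤ c₂(|x|+1)^{β₂}` with `β₁ ≤ β₂`. -/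
structure AssumptionA {n : ℕ} (V : EuclideanSpace ℝ (Fin n) → ℝ)
    (R c₁ C0 β₁ c₂ β₂ : ℝ) : Prop where
  hR : 0 < R
  hc₁ : 0 < c₁
  hC0 : 0 < C0
  hβ₁ : 0 < β₁
  hc₂ : 0 < c₂
  hβ₁₂ : β₁ ≤ β₂
  loc_bdd : ∀ K : Set (EuclideanSpace ℝ (Fin n)), IsCompact K → ∃ M, ∀ x ∈ K, |V x| ≤ M
  loc_lip : ∀ K : Set (EuclideanSpace ℝ (Fin n)), IsCompact K →
      Disjoint K (Metric.ball 0 R) → ∃ L : NNReal, LipschitzOnWith L V K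
  lower : ∀ x, c₁ * ‖x‖ ^ β₁ - C0 ≤ V x
  upper : ∀ x, |V x| + ‖fderiv ℝ V x‖ ≤ c₂ * (‖x‖ + 1) ^ β₂

/-- The eigenvalues `λ_k` (listed in nondecreasing order, tending to `+∞`) and the
`L²`-orthonormal eigenfunctions `φ_k` of `H = −Δ + V` on `ℝⁿ`. -/
structure EigenData (n : ℕ) (V : EuclideanSpace ℝ (Fin n) → ℝ) where
  eval : ℕ → ℝ
  efun : ℕ → EuclideanSpace ℝ (Fin n) → ℝ
  eval_mono : Monotone eval
  eval_tendsto : Tendsto eval atTop atTop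
  efun_smooth : ∀ k, ContDiff ℝ 2 (efun k)
  efun_mem : ∀ k, MemLp (efun k) 2 (volume : Measure (EuclideanSpace ℝ (Fin n)))
  efun_eqn : ∀ k x, - lapl (efun k) x + V x * efun k x = eval k * efun k x
  efun_ortho : ∀ k l, ∫ x, efun k x * efun l x = if k = l then (1 : ℝ) else 0

/-- A finite linear combination `φ = Σ_{λ_k ≤ λ} α_k φ_k`, i.e. a generic element of
`Ran(P_λ(H))` (the eigenvalue constraint is imposed separately). -/
def eigSum {n : ℕ} {V : EuclideanSpace ℝ (Fin n) → ℝ} (ed : EigenData n V)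
    (S : Finset ℕ) (a : ℕ → ℝ) : EuclideanSpace ℝ (Fin n) → ℝ :=
  fun x => ∑ k ∈ S, a k * ed.efun k x

/-- `S_λ(s)`: `sinh(√λ s)/√λ` for `λ > 0`, `s` for `λ = 0`, `sin(√(−λ) s)/√(−λ)` for `λ < 0`. -/
def Sfun (l s : ℝ) : ℝ :=
  if 0 < l then Real.sinh (Real.sqrt l * s) / Real.sqrt l
  else if l = 0 then s
  else Real.sin (Real.sqrt (-l) * s) / Real.sqrt (-l)

/-- The lifted (ghost-dimension) function `Φ̂(x, s) = Σ α_k φ_k(x) S_{λ_k}(s)`. -/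
def eigLift {n : ℕ} {V : EuclideanSpace ℝ (Fin n) → ℝ} (ed : EigenData n V)
    (S : Finset ℕ) (a : ℕ → ℝ) : EuclideanSpace ℝ (Fin n) × ℝ → ℝ :=
  fun p => ∑ k ∈ S, a k * ed.efun k p.1 * Sfun (ed.eval k) p.2

/-- Squared `L²(U)` norm. -/
def l2sq {α : Type*} [MeasureSpace α] (U : Set α) (f : α → ℝ) : ℝ :=
  ∫ p in U, (f p) ^ 2

/-- Squared `H¹(U)` norm, `∫_U |f|² + |∇f|²`. -/
def h1sq {α : Type*} [NormedAddCommGroup α] [NormedSpace ℝ α] [MeasureSpace α]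
    (U : Set α) (f : α → ℝ) : ℝ :=
  ∫ p in U, ((f p) ^ 2 + ‖fderiv ℝ f p‖ ^ 2)

/-- The unit cube `Λ₁(j) = j + (−1/2, 1/2)ⁿ`. -/
def unitCube {n : ℕ} (j : Fin n → ℤ) : Set (EuclideanSpace ℝ (Fin n)) :=
  {x | ∀ i, |x i - (j i : ℝ)| < 1 / 2}

/-- The Euclidean norm `|j|` of `j ∈ ℤⁿ`. -/
def znorm {n : ℕ} (j : Fin n → ℤ) : ℝ :=
  Real.sqrt (∑ i, ((j i : ℝ)) ^ 2)

/-- Sensor set: a measurable `Ω` with `|Ω ∩ Λ₁(j)| ≥ δ^{1+|j|^σ}` for all `j ∈ ℤⁿ`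
(recall `|Λ₁(j)| = 1`). -/
def IsSensorSet {n : ℕ} (Ω : Set (EuclideanSpace ℝ (Fin n))) (δ σ : ℝ) : Prop :=
  MeasurableSet Ω ∧
    ∀ j : Fin n → ℤ, ENNReal.ofReal (δ ^ (1 + znorm j ^ σ)) ≤ volume (Ω ∩ unitCube j)

/-- The pointwise Laplacian of a complex-valued function on `ℝⁿ`. -/
def laplC {n : ℕ} (f : EuclideanSpace ℝ (Fin n) → ℂ) (x : EuclideanSpace ℝ (Fin n)) : ℂ :=
  ∑ i : Fin n,
    fderiv ℝ (fun y => fderiv ℝ f y (EuclideanSpace.single i 1)) x (EuclideanSpace.single i 1)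

/-- The complex lifted function
`Φ(x, s, t, y) = Σ_{λ_k ≤ λ} α_k φ_k(x) S_{λ_k}(s) e^{i2(K+C₀)^{1/2} t} e^{τ₀ y}`,
where `τ₀ = √(5C₀ + 4K)` and `K = ‖V‖_{C^{0,1}(ω)}`. -/
def eigLiftC {n : ℕ} {V : EuclideanSpace ℝ (Fin n) → ℝ} (ed : EigenData n V)
    (S : Finset ℕ) (a : ℕ → ℝ) (K C₀ : ℝ) :
    EuclideanSpace ℝ (Fin n) × ℝ × ℝ × ℝ → ℂ :=
  fun p =>
    ((∑ k ∈ S, a k * ed.efun k p.1 * Sfun (ed.eval k) p.2.1 : ℝ) : ℂ) *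
      Complex.exp (Complex.I * (2 * Real.sqrt (K + C₀)) * (p.2.2.1 : ℂ)) *
      ((Real.exp (Real.sqrt (5 * C₀ + 4 * K) * p.2.2.2) : ℝ) : ℂ)

def Cfun (l s : ℝ) : ℝ :=
  if 0 < l then Real.cosh (Real.sqrt l * s)
  else if l = 0 then 1
  else Real.cos (Real.sqrt (-l) * s)

lemma Sfun_zero (l : ℝ) : Sfun l 0 = 0 := by
  unfold Sfun; split_ifs <;> simp

lemma Cfun_zero (l : ℝ) : Cfun l 0 = 1 := by
  unfold Cfun; split_ifs <;> simp

lemma hasDerivAt_Sfun (l s : ℝ) : HasDerivAt (Sfun l) (Cfun l s) s := by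
  unfold Sfun Cfun
  split_ifs with h1 h2
  · have hl : Real.sqrt l ≠ 0 := ne_of_gt (Real.sqrt_pos.2 h1)
    have hm : HasDerivAt (fun s : ℝ => Real.sqrt l * s) (Real.sqrt l) s := by
      simpa using (hasDerivAt_id s).const_mul (Real.sqrt l)
    have := (hm.sinh).div_const (Real.sqrt l)
    simpa [mul_div_assoc, mul_div_cancel_right₀ _ hl] using this
  · exact hasDerivAt_id' s
  · have hl0 : 0 < -l := by rcases lt_trichotomy l 0 with h|h|h <;> simp_all
    have hl : Real.sqrt (-l) ≠ 0 := ne_of_gt (Real.sqrt_pos.2 hl0)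
    have hm : HasDerivAt (fun s : ℝ => Real.sqrt (-l) * s) (Real.sqrt (-l)) s := by
      simpa using (hasDerivAt_id s).const_mul (Real.sqrt (-l))
    have := (hm.sin).div_const (Real.sqrt (-l))
    simpa [mul_div_assoc, mul_div_cancel_right₀ _ hl] using this

lemma hasDerivAt_Cfun (l s : ℝ) : HasDerivAt (Cfun l) (l * Sfun l s) s := by
  unfold Sfun Cfun
  split_ifs with h1 h2
  · have hl : Real.sqrt l * Real.sqrt l = l := Real.mul_self_sqrt h1.le
    have hm : HasDerivAt (fun s : ℝ => Real.sqrt l * s) (Real.sqrt l) s := by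
      simpa using (hasDerivAt_id s).const_mul (Real.sqrt l)
    have h := hm.cosh
    have hval : Real.sinh (Real.sqrt l * s) * Real.sqrt l
        = l * (Real.sinh (Real.sqrt l * s) / Real.sqrt l) := by
      have hl' : Real.sqrt l ≠ 0 := ne_of_gt (Real.sqrt_pos.2 h1)
      field_simp
      rw [sq, hl]; ring
    rwa [hval] at h
  · simpa [h2] using (hasDerivAt_const s (1:ℝ))
  · have hl0 : 0 < -l := by rcases lt_trichotomy l 0 with h|h|h <;> simp_all
    have hl : Real.sqrt (-l) * Real.sqrt (-l) = -l := Real.mul_self_sqrt hl0.le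
    have hm : HasDerivAt (fun s : ℝ => Real.sqrt (-l) * s) (Real.sqrt (-l)) s := by
      simpa using (hasDerivAt_id s).const_mul (Real.sqrt (-l))
    have h := hm.cos
    have hval : -(Real.sin (Real.sqrt (-l) * s)) * Real.sqrt (-l)
        = l * (Real.sin (Real.sqrt (-l) * s) / Real.sqrt (-l)) := by
      have hl' : Real.sqrt (-l) ≠ 0 := ne_of_gt (Real.sqrt_pos.2 hl0)
      field_simp
      rw [sq, hl]; ring
    rwa [hval] at h


lemma ofReal_hasFDerivAt_cmul {E : Type*} [NormedAddCommGroup E] [NormedSpace ℝ E]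
    {f : E → ℝ} {f' : E →L[ℝ] ℝ} {x : E} (hf : HasFDerivAt f f' x) (c : ℂ) :
    HasFDerivAt (fun y => c * ((f y : ℝ) : ℂ)) ((c • Complex.ofRealCLM).comp f') x := by
  have h := ((c • Complex.ofRealCLM).hasFDerivAt).comp x hf
  simpa [Function.comp_def, smul_eq_mul] using h

lemma fderiv_cmul_ofReal_apply {E : Type*} [NormedAddCommGroup E] [NormedSpace ℝ E]
    {f : E → ℝ} {x : E} (hf : DifferentiableAt ℝ f x) (c : ℂ) (v : E) :
    fderiv ℝ (fun y => c * ((f y : ℝ) : ℂ)) x v = c * ((fderiv ℝ f x v : ℝ) : ℂ) := by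
  rw [(ofReal_hasFDerivAt_cmul hf.hasFDerivAt c).fderiv]
  simp [smul_eq_mul]

lemma fderiv_sum_const_mul {E : Type*} [NormedAddCommGroup E] [NormedSpace ℝ E]
    {ι : Type*} (S : Finset ι) (b : ι → ℝ) (g : ι → E → ℝ) {x : E}
    (hg : ∀ k ∈ S, DifferentiableAt ℝ (g k) x) (v : E) :
    fderiv ℝ (fun y => ∑ k ∈ S, b k * g k y) x v = ∑ k ∈ S, b k * fderiv ℝ (g k) x v := by
  have h := HasFDerivAt.fun_sum (fun k hk => ((hg k hk).hasFDerivAt.const_mul (b k)))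
  rw [h.fderiv]
  simp [smul_eq_mul]

lemma diff_fderiv_apply {E : Type*} [NormedAddCommGroup E] [NormedSpace ℝ E]
    {f : E → ℝ} (hf : ContDiff ℝ 2 f) (v : E) :
    Differentiable ℝ (fun y => fderiv ℝ f y v) := by
  have h1 : ContDiff ℝ 1 (fderiv ℝ f) := hf.fderiv_right (by norm_num)
  have h2 : Differentiable ℝ (fderiv ℝ f) := h1.differentiable one_ne_zero
  exact (ContinuousLinearMap.apply ℝ ℝ v).differentiable.comp h2

lemma lapl_sum {n : ℕ} (S : Finset ℕ) (b : ℕ → ℝ)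
    (φ : ℕ → EuclideanSpace ℝ (Fin n) → ℝ)
    (hφ : ∀ k ∈ S, ContDiff ℝ 2 (φ k)) (x : EuclideanSpace ℝ (Fin n)) :
    lapl (fun y => ∑ k ∈ S, b k * φ k y) x = ∑ k ∈ S, b k * lapl (φ k) x := by
  unfold lapl
  simp_rw [Finset.mul_sum]
  rw [Finset.sum_comm]
  refine Finset.sum_congr rfl fun i _ => ?_
  set v := EuclideanSpace.single i (1:ℝ) with hv
  have h1 : (fun y => fderiv ℝ (fun z => ∑ k ∈ S, b k * φ k z) y v)
      = fun y => ∑ k ∈ S, b k * fderiv ℝ (φ k) y v := by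
    funext y
    exact fderiv_sum_const_mul S b φ
      (fun k hk => ((hφ k hk).differentiable two_ne_zero).differentiableAt) v
  rw [h1, fderiv_sum_const_mul S b (fun k y => fderiv ℝ (φ k) y v)
      (fun k hk => (diff_fderiv_apply (hφ k hk) v).differentiableAt) v]

lemma laplC_cmul {n : ℕ} {f : EuclideanSpace ℝ (Fin n) → ℝ} (hf : ContDiff ℝ 2 f)
    (c : ℂ) (x : EuclideanSpace ℝ (Fin n)) :
    laplC (fun x' => c * ((f x' : ℝ) : ℂ)) x = c * ((lapl f x : ℝ) : ℂ) := by
  unfold laplC lapl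
  push_cast
  rw [Finset.mul_sum]
  refine Finset.sum_congr rfl fun i _ => ?_
  set v := EuclideanSpace.single i (1:ℝ) with hv
  have hdf : Differentiable ℝ f := hf.differentiable two_ne_zero
  have h1 : (fun y => fderiv ℝ (fun x' => c * ((f x' : ℝ) : ℂ)) y v)
      = fun y => c * ((fderiv ℝ f y v : ℝ) : ℂ) := by
    funext y; exact fderiv_cmul_ofReal_apply (hdf y) c v
  rw [h1, fderiv_cmul_ofReal_apply ((diff_fderiv_apply hf v) x) c v]


lemma final_alg (P w L1 L2 s0 : ℂ) (Vx K C₀ Qr r2 : ℝ)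
    (hKC : K + C₀ ≠ 0)
    (h12 : L1 + L2 = (Vx : ℂ) * w)
    (hs : s0 * s0 = (K : ℂ) + (C₀ : ℂ))
    (hr2 : r2 = (5 * C₀ + 4 * K) * Qr) :
    P * (Qr : ℂ) * L1 + L2 * P * (Qr : ℂ) +
      (((Vx + 5 * C₀ + 4 * K) / (4 * (K + C₀)) : ℝ) : ℂ) *
        (w * (P * (Complex.I * (2 * s0)) * (Complex.I * (2 * s0))) * (Qr : ℂ)) +
      w * P * ((r2 : ℝ) : ℂ) = 0 := by
  have h4 : (4 * (K + C₀) : ℝ) ≠ 0 := mul_ne_zero four_ne_zero hKC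
  have hcf : ((Vx + 5 * C₀ + 4 * K) / (4 * (K + C₀)) : ℝ) * (4 * (K + C₀))
      = Vx + 5 * C₀ + 4 * K := div_mul_cancel₀ _ h4
  have hcfC : (((Vx + 5 * C₀ + 4 * K) / (4 * (K + C₀)) : ℝ) : ℂ) * (4 * ((K : ℂ) + (C₀ : ℂ)))
      = (Vx : ℂ) + 5 * (C₀ : ℂ) + 4 * (K : ℂ) := by exact_mod_cast hcf
  have hr2C : ((r2 : ℝ) : ℂ) = (5 * (C₀ : ℂ) + 4 * (K : ℂ)) * (Qr : ℂ) := by exact_mod_cast hr2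
  have hI : Complex.I * Complex.I = -1 := Complex.I_mul_I
  linear_combination (P * (Qr : ℂ)) * h12 + (w * P) * hr2C
    - (w * P * (Qr : ℂ)) * hcfC
    + ((((Vx + 5 * C₀ + 4 * K) / (4 * (K + C₀)) : ℝ) : ℂ) * w * P * (Qr : ℂ) * 4
        * Complex.I * Complex.I) * hs
    + ((((Vx + 5 * C₀ + 4 * K) / (4 * (K + C₀)) : ℝ) : ℂ) * w * P * (Qr : ℂ) * 4
        * ((K : ℂ) + (C₀ : ℂ))) * hI


/-- away from the origin, with `K = ‖V‖_{C^{0,1}(ω)}`, `τ₀ = √(5C₀+4K)`,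
the complex lifted function `Φ` satisfies the divergence-form equation
`div(A∇Φ) = 0` in `ℝ^{n+3}` with `A = diag(I, 1, (V+5C₀+4K)/(4(K+C₀)), 1)`
(written out coordinatewise, the third coefficient depending only on `x`), and on
`{s = 0}` its gradient is `∇Φ(x,0,t,y) = (0, φ̂(x,t,y), 0, 0)` with
`φ̂ = e^{i2(K+C₀)^{1/2}t} e^{τ₀ y} φ`. -/
theorem lifted_complex_equation {n : ℕ} (hn : 1 ≤ n)
    (V : EuclideanSpace ℝ (Fin n) → ℝ) (c₁ C0 β₁ c₂ β₂ : ℝ)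
    (hA : AssumptionA V 20 c₁ C0 β₁ c₂ β₂)
    (C₀ : ℝ) (hC₀ : 0 < C₀) (hVC₀ : ∀ x, -C₀ + 1 ≤ V x)
    (ω : Set (EuclideanSpace ℝ (Fin n))) (hωopen : IsOpen ω) (hωne : ω.Nonempty)
    (hωbdd : Bornology.IsBounded ω)
    (hω20 : ω ⊆ (Metric.ball (0 : EuclideanSpace ℝ (Fin n)) 20)ᶜ)
    (K : ℝ) (hK : K = ⨆ x ∈ ω, (|V x| + ‖fderiv ℝ V x‖))
    (ed : EigenData n V) (lam : ℝ) (S : Finset ℕ) (a : ℕ → ℝ)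
    (hS : ∀ k ∈ S, ed.eval k ≤ lam) :
    (∀ (x : EuclideanSpace ℝ (Fin n)) (s t y : ℝ),
        laplC (fun x' => eigLiftC ed S a K C₀ (x', s, t, y)) x +
          deriv (fun s' => deriv (fun s'' => eigLiftC ed S a K C₀ (x, s'', t, y)) s') s +
          (((V x + 5 * C₀ + 4 * K) / (4 * (K + C₀)) : ℝ) : ℂ) *
            deriv (fun t' => deriv (fun t'' => eigLiftC ed S a K C₀ (x, s, t'', y)) t') t +
          deriv (fun y' => deriv (fun y'' => eigLiftC ed S a K C₀ (x, s, t, y'')) y') y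
          = 0) ∧
    (∀ (x : EuclideanSpace ℝ (Fin n)) (t y : ℝ),
        fderiv ℝ (fun x' => eigLiftC ed S a K C₀ (x', 0, t, y)) x = 0 ∧
        deriv (fun s => eigLiftC ed S a K C₀ (x, s, t, y)) 0 =
          Complex.exp (Complex.I * (2 * Real.sqrt (K + C₀)) * (t : ℂ)) *
            ((Real.exp (Real.sqrt (5 * C₀ + 4 * K) * y) : ℝ) : ℂ) *
            ((eigSum ed S a x : ℝ) : ℂ) ∧
        deriv (fun t' => eigLiftC ed S a K C₀ (x, 0, t', y)) t = 0 ∧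
        deriv (fun y' => eigLiftC ed S a K C₀ (x, 0, t, y')) y = 0) := by
  have hK0 : 0 ≤ K := by
    rw [hK]
    exact Real.iSup_nonneg fun x => Real.iSup_nonneg fun _ => by positivity
  have hKC : 0 < K + C₀ := by linarith
  have hKCne : K + C₀ ≠ 0 := ne_of_gt hKC
  have h5 : (0 : ℝ) ≤ 5 * C₀ + 4 * K := by linarith
  have hs2 : Real.sqrt (K + C₀) * Real.sqrt (K + C₀) = K + C₀ := Real.mul_self_sqrt hKC.le
  have hsC : ((Real.sqrt (K + C₀) : ℝ) : ℂ) * ((Real.sqrt (K + C₀) : ℝ) : ℂ)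
      = (K : ℂ) + (C₀ : ℂ) := by exact_mod_cast hs2
  have hτ2 : Real.sqrt (5 * C₀ + 4 * K) * Real.sqrt (5 * C₀ + 4 * K) = 5 * C₀ + 4 * K := Real.mul_self_sqrt h5
  have hPd : ∀ (c : ℂ) (t' : ℝ),
      HasDerivAt (fun u : ℝ => Complex.exp (c * (u : ℂ))) (Complex.exp (c * (t' : ℂ)) * c) t' := by
    intro c t'
    have h0 : HasDerivAt (fun u : ℝ => ((u : ℝ) : ℂ)) 1 t' := by
      simpa using (hasDerivAt_id' t').ofReal_comp
    have h1 : HasDerivAt (fun u : ℝ => c * ((u : ℝ) : ℂ)) c t' := by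
      simpa using h0.const_mul c
    exact h1.cexp
  have hExpd : ∀ (τ y' : ℝ),
      HasDerivAt (fun u : ℝ => Real.exp (τ * u)) (Real.exp (τ * y') * τ) y' := by
    intro τ y'
    have h : HasDerivAt (fun u : ℝ => τ * u) τ y' := by
      simpa using (hasDerivAt_id y').const_mul τ
    exact h.exp
  constructor
  · intro x s t y
    -- x-part
    have hw2 : ContDiff ℝ 2 (fun x' => ∑ k ∈ S, (a k * Sfun (ed.eval k) s) * ed.efun k x') :=
      ContDiff.sum fun k _ => contDiff_const.mul (ed.efun_smooth k)
    have hfun1 : (fun x' => eigLiftC ed S a K C₀ (x', s, t, y))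
        = fun x' => Complex.exp (Complex.I * (2 * Real.sqrt (K + C₀)) * (t : ℂ)) * ((Real.exp (Real.sqrt (5 * C₀ + 4 * K) * y) : ℝ) : ℂ) * ((∑ k ∈ S, (a k * Sfun (ed.eval k) s) * ed.efun k x' : ℝ) : ℂ) := by
      funext x'
      show ((∑ k ∈ S, a k * ed.efun k x' * Sfun (ed.eval k) s : ℝ) : ℂ) * Complex.exp (Complex.I * (2 * Real.sqrt (K + C₀)) * (t : ℂ)) * ((Real.exp (Real.sqrt (5 * C₀ + 4 * K) * y) : ℝ) : ℂ) = _
      rw [show (∑ k ∈ S, a k * ed.efun k x' * Sfun (ed.eval k) s) = ∑ k ∈ S, (a k * Sfun (ed.eval k) s) * ed.efun k x' from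
        Finset.sum_congr rfl fun k _ => by ring]
      ring
    have hX1 : laplC (fun x' => eigLiftC ed S a K C₀ (x', s, t, y)) x
        = Complex.exp (Complex.I * (2 * Real.sqrt (K + C₀)) * (t : ℂ)) * ((Real.exp (Real.sqrt (5 * C₀ + 4 * K) * y) : ℝ) : ℂ) * ((∑ k ∈ S, (a k * Sfun (ed.eval k) s) * (V x * ed.efun k x - ed.eval k * ed.efun k x) : ℝ) : ℂ) := by
      rw [hfun1, laplC_cmul hw2 (Complex.exp (Complex.I * (2 * Real.sqrt (K + C₀)) * (t : ℂ)) * ((Real.exp (Real.sqrt (5 * C₀ + 4 * K) * y) : ℝ) : ℂ)) x]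
      congr 1
      norm_cast
      rw [lapl_sum S (fun k => a k * Sfun (ed.eval k) s) ed.efun (fun k _ => ed.efun_smooth k) x]
      refine Finset.sum_congr rfl fun k _ => ?_
      have h := ed.efun_eqn k x
      have h2 : lapl (ed.efun k) x = V x * ed.efun k x - ed.eval k * ed.efun k x := by linarith
      rw [h2]
    -- s-part
    have hws : ∀ s' : ℝ, HasDerivAt (fun u : ℝ => ∑ k ∈ S, a k * ed.efun k x * Sfun (ed.eval k) u)
        (∑ k ∈ S, a k * ed.efun k x * Cfun (ed.eval k) s') s' := fun s' =>
      HasDerivAt.fun_sum fun k _ => (hasDerivAt_Sfun (ed.eval k) s').const_mul (a k * ed.efun k x)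
    have hfun2 : (fun s'' => eigLiftC ed S a K C₀ (x, s'', t, y))
        = fun s'' : ℝ => ((∑ k ∈ S, a k * ed.efun k x * Sfun (ed.eval k) s'' : ℝ) : ℂ)
            * Complex.exp (Complex.I * (2 * Real.sqrt (K + C₀)) * (t : ℂ)) * ((Real.exp (Real.sqrt (5 * C₀ + 4 * K) * y) : ℝ) : ℂ) := rfl
    have hd1 : ∀ s' : ℝ, deriv (fun s'' => eigLiftC ed S a K C₀ (x, s'', t, y)) s'
        = ((∑ k ∈ S, a k * ed.efun k x * Cfun (ed.eval k) s' : ℝ) : ℂ) * Complex.exp (Complex.I * (2 * Real.sqrt (K + C₀)) * (t : ℂ)) * ((Real.exp (Real.sqrt (5 * C₀ + 4 * K) * y) : ℝ) : ℂ) := by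
      intro s'
      rw [hfun2]
      exact ((((hws s').ofReal_comp).mul_const (Complex.exp (Complex.I * (2 * Real.sqrt (K + C₀)) * (t : ℂ)))).mul_const ((Real.exp (Real.sqrt (5 * C₀ + 4 * K) * y) : ℝ) : ℂ)).deriv
    have hX2 : deriv (fun s' => deriv (fun s'' => eigLiftC ed S a K C₀ (x, s'', t, y)) s') s
        = ((∑ k ∈ S, a k * ed.efun k x * (ed.eval k * Sfun (ed.eval k) s) : ℝ) : ℂ) * Complex.exp (Complex.I * (2 * Real.sqrt (K + C₀)) * (t : ℂ)) * ((Real.exp (Real.sqrt (5 * C₀ + 4 * K) * y) : ℝ) : ℂ) := by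
      rw [funext hd1]
      have hws2 : HasDerivAt (fun u : ℝ => ∑ k ∈ S, a k * ed.efun k x * Cfun (ed.eval k) u)
          (∑ k ∈ S, a k * ed.efun k x * (ed.eval k * Sfun (ed.eval k) s)) s :=
        HasDerivAt.fun_sum fun k _ => (hasDerivAt_Cfun (ed.eval k) s).const_mul (a k * ed.efun k x)
      exact (((hws2.ofReal_comp).mul_const (Complex.exp (Complex.I * (2 * Real.sqrt (K + C₀)) * (t : ℂ)))).mul_const ((Real.exp (Real.sqrt (5 * C₀ + 4 * K) * y) : ℝ) : ℂ)).deriv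
    -- t-part
    have hfun3 : (fun t'' => eigLiftC ed S a K C₀ (x, s, t'', y))
        = fun t'' : ℝ => ((∑ k ∈ S, a k * ed.efun k x * Sfun (ed.eval k) s : ℝ) : ℂ) * Complex.exp ((Complex.I * (2 * Real.sqrt (K + C₀))) * (t'' : ℂ)) * ((Real.exp (Real.sqrt (5 * C₀ + 4 * K) * y) : ℝ) : ℂ) := rfl
    have hd3 : ∀ t' : ℝ, deriv (fun t'' => eigLiftC ed S a K C₀ (x, s, t'', y)) t'
        = ((∑ k ∈ S, a k * ed.efun k x * Sfun (ed.eval k) s : ℝ) : ℂ) * (Complex.exp ((Complex.I * (2 * Real.sqrt (K + C₀))) * (t' : ℂ)) * (Complex.I * (2 * Real.sqrt (K + C₀)))) * ((Real.exp (Real.sqrt (5 * C₀ + 4 * K) * y) : ℝ) : ℂ) := by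
      intro t'
      rw [hfun3]
      exact (((hPd (Complex.I * (2 * Real.sqrt (K + C₀))) t').const_mul ((∑ k ∈ S, a k * ed.efun k x * Sfun (ed.eval k) s : ℝ) : ℂ)).mul_const ((Real.exp (Real.sqrt (5 * C₀ + 4 * K) * y) : ℝ) : ℂ)).deriv
    have hX3 : deriv (fun t' => deriv (fun t'' => eigLiftC ed S a K C₀ (x, s, t'', y)) t') t
        = ((∑ k ∈ S, a k * ed.efun k x * Sfun (ed.eval k) s : ℝ) : ℂ) * (Complex.exp (Complex.I * (2 * Real.sqrt (K + C₀)) * (t : ℂ)) * (Complex.I * (2 * Real.sqrt (K + C₀))) * (Complex.I * (2 * Real.sqrt (K + C₀)))) * ((Real.exp (Real.sqrt (5 * C₀ + 4 * K) * y) : ℝ) : ℂ) := by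
      rw [funext hd3]
      have h2 : HasDerivAt (fun u : ℝ => Complex.exp ((Complex.I * (2 * Real.sqrt (K + C₀))) * (u : ℂ)) * (Complex.I * (2 * Real.sqrt (K + C₀))))
          (Complex.exp (Complex.I * (2 * Real.sqrt (K + C₀)) * (t : ℂ)) * (Complex.I * (2 * Real.sqrt (K + C₀))) * (Complex.I * (2 * Real.sqrt (K + C₀)))) t := (hPd (Complex.I * (2 * Real.sqrt (K + C₀))) t).mul_const (Complex.I * (2 * Real.sqrt (K + C₀)))
      exact ((h2.const_mul ((∑ k ∈ S, a k * ed.efun k x * Sfun (ed.eval k) s : ℝ) : ℂ)).mul_const ((Real.exp (Real.sqrt (5 * C₀ + 4 * K) * y) : ℝ) : ℂ)).deriv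
    -- y-part
    have hfun4 : (fun y'' => eigLiftC ed S a K C₀ (x, s, t, y''))
        = fun y'' : ℝ => ((∑ k ∈ S, a k * ed.efun k x * Sfun (ed.eval k) s : ℝ) : ℂ) * Complex.exp (Complex.I * (2 * Real.sqrt (K + C₀)) * (t : ℂ)) * ((Real.exp (Real.sqrt (5 * C₀ + 4 * K) * y'') : ℝ) : ℂ) := rfl
    have hd4 : ∀ y' : ℝ, deriv (fun y'' => eigLiftC ed S a K C₀ (x, s, t, y'')) y'
        = ((∑ k ∈ S, a k * ed.efun k x * Sfun (ed.eval k) s : ℝ) : ℂ) * Complex.exp (Complex.I * (2 * Real.sqrt (K + C₀)) * (t : ℂ)) * ((Real.exp (Real.sqrt (5 * C₀ + 4 * K) * y') * Real.sqrt (5 * C₀ + 4 * K) : ℝ) : ℂ) := by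
      intro y'
      rw [hfun4]
      exact (((hExpd (Real.sqrt (5 * C₀ + 4 * K)) y').ofReal_comp).const_mul (((∑ k ∈ S, a k * ed.efun k x * Sfun (ed.eval k) s : ℝ) : ℂ) * Complex.exp (Complex.I * (2 * Real.sqrt (K + C₀)) * (t : ℂ)))).deriv
    have hX4 : deriv (fun y' => deriv (fun y'' => eigLiftC ed S a K C₀ (x, s, t, y'')) y') y
        = ((∑ k ∈ S, a k * ed.efun k x * Sfun (ed.eval k) s : ℝ) : ℂ) * Complex.exp (Complex.I * (2 * Real.sqrt (K + C₀)) * (t : ℂ)) * ((Real.exp (Real.sqrt (5 * C₀ + 4 * K) * y) * Real.sqrt (5 * C₀ + 4 * K) * Real.sqrt (5 * C₀ + 4 * K) : ℝ) : ℂ) := by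
      rw [funext hd4]
      exact (((((hExpd (Real.sqrt (5 * C₀ + 4 * K)) y).mul_const (Real.sqrt (5 * C₀ + 4 * K)))).ofReal_comp).const_mul (((∑ k ∈ S, a k * ed.efun k x * Sfun (ed.eval k) s : ℝ) : ℂ) * Complex.exp (Complex.I * (2 * Real.sqrt (K + C₀)) * (t : ℂ)))).deriv
    -- assemble
    rw [hX1, hX2, hX3, hX4]
    have hreal1 : (∑ k ∈ S, (a k * Sfun (ed.eval k) s) * (V x * ed.efun k x - ed.eval k * ed.efun k x)) + (∑ k ∈ S, a k * ed.efun k x * (ed.eval k * Sfun (ed.eval k) s)) = V x * (∑ k ∈ S, a k * ed.efun k x * Sfun (ed.eval k) s) := by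
      rw [← Finset.sum_add_distrib, Finset.mul_sum]
      exact Finset.sum_congr rfl fun k _ => by ring
    have h12C : ((∑ k ∈ S, (a k * Sfun (ed.eval k) s) * (V x * ed.efun k x - ed.eval k * ed.efun k x) : ℝ) : ℂ) + ((∑ k ∈ S, a k * ed.efun k x * (ed.eval k * Sfun (ed.eval k) s) : ℝ) : ℂ) = ((V x : ℝ) : ℂ) * ((∑ k ∈ S, a k * ed.efun k x * Sfun (ed.eval k) s : ℝ) : ℂ) := by
      exact_mod_cast hreal1
    have hr2 : Real.exp (Real.sqrt (5 * C₀ + 4 * K) * y) * Real.sqrt (5 * C₀ + 4 * K) * Real.sqrt (5 * C₀ + 4 * K) = (5 * C₀ + 4 * K) * Real.exp (Real.sqrt (5 * C₀ + 4 * K) * y) := by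
      rw [mul_assoc, hτ2]; ring
    exact final_alg (Complex.exp (Complex.I * (2 * Real.sqrt (K + C₀)) * (t : ℂ))) ((∑ k ∈ S, a k * ed.efun k x * Sfun (ed.eval k) s : ℝ) : ℂ) ((∑ k ∈ S, (a k * Sfun (ed.eval k) s) * (V x * ed.efun k x - ed.eval k * ed.efun k x) : ℝ) : ℂ) ((∑ k ∈ S, a k * ed.efun k x * (ed.eval k * Sfun (ed.eval k) s) : ℝ) : ℂ)
      ((Real.sqrt (K + C₀) : ℝ) : ℂ) (V x) K C₀ (Real.exp (Real.sqrt (5 * C₀ + 4 * K) * y)) (Real.exp (Real.sqrt (5 * C₀ + 4 * K) * y) * Real.sqrt (5 * C₀ + 4 * K) * Real.sqrt (5 * C₀ + 4 * K))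
      hKCne h12C hsC hr2
  · intro x t y
    refine ⟨?_, ?_, ?_, ?_⟩
    · have h0 : (fun x' => eigLiftC ed S a K C₀ (x', 0, t, y)) = fun _ => (0 : ℂ) := by
        funext x'
        show ((∑ k ∈ S, a k * ed.efun k x' * Sfun (ed.eval k) 0 : ℝ) : ℂ) * Complex.exp (Complex.I * (2 * Real.sqrt (K + C₀)) * (t : ℂ)) * ((Real.exp (Real.sqrt (5 * C₀ + 4 * K) * y) : ℝ) : ℂ) = 0
        simp [Sfun_zero]
      rw [h0]
      simp
    · have hws : HasDerivAt (fun u : ℝ => ∑ k ∈ S, a k * ed.efun k x * Sfun (ed.eval k) u)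
          (∑ k ∈ S, a k * ed.efun k x * Cfun (ed.eval k) 0) 0 :=
        HasDerivAt.fun_sum fun k _ => (hasDerivAt_Sfun (ed.eval k) 0).const_mul (a k * ed.efun k x)
      have hfun2 : (fun s : ℝ => eigLiftC ed S a K C₀ (x, s, t, y))
          = fun s : ℝ => ((∑ k ∈ S, a k * ed.efun k x * Sfun (ed.eval k) s : ℝ) : ℂ)
              * Complex.exp (Complex.I * (2 * Real.sqrt (K + C₀)) * (t : ℂ)) * ((Real.exp (Real.sqrt (5 * C₀ + 4 * K) * y) : ℝ) : ℂ) := rfl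
      have h1 : deriv (fun s : ℝ => eigLiftC ed S a K C₀ (x, s, t, y)) 0
          = ((∑ k ∈ S, a k * ed.efun k x * Cfun (ed.eval k) 0 : ℝ) : ℂ) * Complex.exp (Complex.I * (2 * Real.sqrt (K + C₀)) * (t : ℂ)) * ((Real.exp (Real.sqrt (5 * C₀ + 4 * K) * y) : ℝ) : ℂ) := by
        rw [hfun2]
        exact (((hws.ofReal_comp).mul_const (Complex.exp (Complex.I * (2 * Real.sqrt (K + C₀)) * (t : ℂ)))).mul_const ((Real.exp (Real.sqrt (5 * C₀ + 4 * K) * y) : ℝ) : ℂ)).deriv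
      rw [h1, show (∑ k ∈ S, a k * ed.efun k x * Cfun (ed.eval k) 0) = eigSum ed S a x by
        simp [eigSum, Cfun_zero]]
      ring
    · have h0 : (fun t' => eigLiftC ed S a K C₀ (x, 0, t', y)) = fun _ => (0 : ℂ) := by
        funext t'
        show ((∑ k ∈ S, a k * ed.efun k x * Sfun (ed.eval k) 0 : ℝ) : ℂ)
            * Complex.exp ((Complex.I * (2 * Real.sqrt (K + C₀))) * (t' : ℂ)) * ((Real.exp (Real.sqrt (5 * C₀ + 4 * K) * y) : ℝ) : ℂ) = 0
        simp [Sfun_zero]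
      rw [h0]
      simp
    · have h0 : (fun y' => eigLiftC ed S a K C₀ (x, 0, t, y')) = fun _ => (0 : ℂ) := by
        funext y'
        show ((∑ k ∈ S, a k * ed.efun k x * Sfun (ed.eval k) 0 : ℝ) : ℂ)
            * Complex.exp (Complex.I * (2 * Real.sqrt (K + C₀)) * (t : ℂ)) * ((Real.exp (Real.sqrt (5 * C₀ + 4 * K) * y') : ℝ) : ℂ) = 0
        simp [Sfun_zero]
      rw [h0]
      simp
end
end

section
/- Let V satisfy Assumption (A), let C₀ > 0 satisfy V(x) ≥ −C₀ + 1 on ℝⁿ, let ω ⊂ ℝⁿ ∖ B₂₀ be a bounded domain, K = ‖V‖_{L^∞(ω)} + ‖DV‖_{L^∞(ω)}, τ₀ = √(5C₀ + 4K), and let Φ(x, s, t, y) = Σ_{λ_k ≤ λ} α_k φ_k(x) S_{λ_k}(s) e^{i 2 (K + C₀)^{1/2} t} e^{τ₀ y} be the lifted complex-valued function associated with φ = Σ_{λ_k ≤ λ} α_k φ_k ∈ Ran(P_λ(H)), and Φ̂(x, s) = Σ_{λ_k ≤ λ} α_k φ_k(x) S_{λ_k}(s). For j ∈ ℤⁿ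 let Q_j = j + (−1, 1)ⁿ. Then there exist constants C, C′ (depending only on n) such that for every j ∈ ℤⁿ and every 0 < ρ < 1: ‖∇Φ‖²_{L²(4Q_j × (−4ρ, 4ρ) × (−4ρ, 4ρ) × (−4ρ, 4ρ))} ≤ C ρ² (5C₀ + 8K) e^{8τ₀ρ} ‖Φ̂‖²_{H¹(4Q_j × (−4ρ, 4ρ))} and ‖∇Φ‖²_{L²(Q_j × (−ρ, ρ) × (−ρ, ρ) × (−ρ, ρ))} ≥ C′ ρ² e^{−2τ₀ρ} ‖Φ̂‖²_{H¹(Q_j × (−ρ, ρ))}. -/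
open MeasureTheory Real Set Filter

noncomputable section

/-- The cube of "radius" `r` centered at `j ∈ ℤⁿ`; `cubeJ j 1 = Q_j = j + (−1,1)ⁿ`
and `cubeJ j 4 = 4Q_j`. -/
def cubeJ {n : ℕ} (j : Fin n → ℤ) (r : ℝ) : Set (EuclideanSpace ℝ (Fin n)) :=
  {x | ∀ i, |x i - (j i : ℝ)| < r}

section AuxSmooth

variable {n : ℕ} {V : EuclideanSpace ℝ (Fin n) → ℝ}

lemma sfun_contDiff (l : ℝ) : ContDiff ℝ 1 (Sfun l) := by
  unfold Sfun
  rcases lt_trichotomy 0 l with h | h | h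
  · simp only [if_pos h]
    exact (Real.contDiff_sinh.comp (contDiff_const.mul contDiff_id)).div_const _
  · simp only [← h, lt_irrefl, if_false, if_pos rfl]
    exact contDiff_id
  · simp only [if_neg (not_lt.2 h.le), if_neg (ne_of_lt h)]
    exact (Real.contDiff_sin.comp (contDiff_const.mul contDiff_id)).div_const _

lemma eigLift_contDiff (ed : EigenData n V) (S : Finset ℕ) (a : ℕ → ℝ) :
    ContDiff ℝ 1 (eigLift ed S a) := by
  unfold eigLift
  apply ContDiff.sum
  intro k _
  exact (contDiff_const.mul (((ed.efun_smooth k).of_le (by norm_num)).comp contDiff_fst)).mul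
    ((sfun_contDiff (ed.eval k)).comp contDiff_snd)

lemma eigLiftC_contDiff (ed : EigenData n V) (S : Finset ℕ) (a : ℕ → ℝ) (K C₀ : ℝ) :
    ContDiff ℝ 1 (eigLiftC ed S a K C₀) := by
  have h1 : ContDiff ℝ 1 (fun p : EuclideanSpace ℝ (Fin n) × ℝ × ℝ × ℝ =>
      ((eigLift ed S a (p.1, p.2.1) : ℝ) : ℂ)) :=
    Complex.ofRealCLM.contDiff.comp ((eigLift_contDiff ed S a).comp
      (contDiff_fst.prodMk (contDiff_fst.comp contDiff_snd)))
  have h2 : ContDiff ℝ 1 (fun p : EuclideanSpace ℝ (Fin n) × ℝ × ℝ × ℝ =>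
      Complex.exp (Complex.I * (2 * Real.sqrt (K + C₀)) * (p.2.2.1 : ℂ))) :=
    Complex.contDiff_exp.comp (contDiff_const.mul
      (Complex.ofRealCLM.contDiff.comp (contDiff_fst.comp (contDiff_snd.comp contDiff_snd))))
  have h3 : ContDiff ℝ 1 (fun p : EuclideanSpace ℝ (Fin n) × ℝ × ℝ × ℝ =>
      ((Real.exp (Real.sqrt (5 * C₀ + 4 * K) * p.2.2.2) : ℝ) : ℂ)) :=
    Complex.ofRealCLM.contDiff.comp (Real.contDiff_exp.comp
      (contDiff_const.mul (contDiff_snd.comp (contDiff_snd.comp contDiff_snd))))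
  exact (h1.mul h2).mul h3

lemma cubeJ_isOpen (j : Fin n → ℤ) (r : ℝ) : IsOpen (cubeJ j r) := by
  have : cubeJ j r = ⋂ i, {x : EuclideanSpace ℝ (Fin n) | |x i - (j i : ℝ)| < r} := by
    ext x; simp [cubeJ, Set.mem_iInter]
  rw [this]
  exact isOpen_iInter_of_finite fun i =>
    isOpen_lt (((EuclideanSpace.proj (𝕜 := ℝ) i).continuous.sub continuous_const).abs)
      continuous_const

lemma cubeJ_bounded (j : Fin n → ℤ) (r : ℝ) : Bornology.IsBounded (cubeJ j r) := by
  rw [Metric.isBounded_iff_subset_closedBall 0]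
  refine ⟨Real.sqrt (∑ i, (|(j i : ℝ)| + |r|) ^ 2), fun x hx => ?_⟩
  rw [Metric.mem_closedBall, dist_zero_right, EuclideanSpace.norm_eq]
  apply Real.sqrt_le_sqrt
  apply Finset.sum_le_sum
  intro i _
  rw [Real.norm_eq_abs]
  apply pow_le_pow_left₀ (abs_nonneg _)
  calc |x i| = |(x i - (j i : ℝ)) + (j i : ℝ)| := by ring_nf
    _ ≤ |x i - (j i : ℝ)| + |(j i : ℝ)| := abs_add_le _ _
    _ ≤ |r| + |(j i : ℝ)| := by
        have := hx i
        have : |x i - (j i : ℝ)| ≤ |r| := le_trans this.le (le_abs_self r)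
        linarith
    _ = |(j i : ℝ)| + |r| := by ring

lemma contIntegrableOn {X : Type*} [NormedAddCommGroup X] [NormedSpace ℝ X]
    [MeasureSpace X] [BorelSpace X] [ProperSpace X]
    [IsFiniteMeasureOnCompacts (volume : Measure X)] {f : X → ℝ} (hf : Continuous f)
    {s : Set X} (hs : Bornology.IsBounded s) : IntegrableOn f s volume :=
  (hf.continuousOn.integrableOn_compact hs.isCompact_closure).mono_set subset_closure

lemma eigLiftC_fderiv_bounds (ed : EigenData n V) (S : Finset ℕ) (a : ℕ → ℝ) (K C₀ : ℝ)
    (hc : 0 ≤ K + C₀) (hτ : 0 ≤ 5 * C₀ + 4 * K)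
    (p : EuclideanSpace ℝ (Fin n) × ℝ × ℝ × ℝ) :
    ‖fderiv ℝ (eigLiftC ed S a K C₀) p‖ ≤
      (‖fderiv ℝ (eigLift ed S a) (p.1, p.2.1)‖ +
        (2 * Real.sqrt (K + C₀) + Real.sqrt (5 * C₀ + 4 * K)) *
          |eigLift ed S a (p.1, p.2.1)|) *
        Real.exp (Real.sqrt (5 * C₀ + 4 * K) * p.2.2.2) ∧
    ‖fderiv ℝ (eigLift ed S a) (p.1, p.2.1)‖ *
        Real.exp (Real.sqrt (5 * C₀ + 4 * K) * p.2.2.2) ≤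
      ‖fderiv ℝ (eigLiftC ed S a K C₀) p‖ ∧
    2 * Real.sqrt (K + C₀) * |eigLift ed S a (p.1, p.2.1)| *
        Real.exp (Real.sqrt (5 * C₀ + 4 * K) * p.2.2.2) ≤
      ‖fderiv ℝ (eigLiftC ed S a K C₀) p‖ := by
  obtain ⟨x, s, t, y⟩ := p
  set X := EuclideanSpace ℝ (Fin n) × ℝ × ℝ × ℝ
  set g := eigLift ed S a with hg
  set Dg := fderiv ℝ g (x, s) with hDg
  set c : ℝ := Real.sqrt (K + C₀) with hcdef
  set τ : ℝ := Real.sqrt (5 * C₀ + 4 * K) with hτdef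
  have hc0 : 0 ≤ c := Real.sqrt_nonneg _
  have hτ0 : 0 ≤ τ := Real.sqrt_nonneg _
  set F : ℝ := Real.exp (τ * y) with hF
  have hF0 : 0 < F := Real.exp_pos _
  set Bp : ℂ := Complex.exp (Complex.I * (2 * (c : ℂ)) * (t : ℂ)) with hBp
  have hBp1 : ‖Bp‖ = 1 := by
    rw [hBp, Complex.norm_exp]
    have : (Complex.I * (2 * (c : ℂ)) * (t : ℂ)).re = 0 := by simp
    rw [this, Real.exp_zero]
  -- the explicit derivative
  have hπ12 : HasFDerivAt (fun w : X => (w.1, w.2.1))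
      ((ContinuousLinearMap.fst ℝ (EuclideanSpace ℝ (Fin n)) (ℝ × ℝ × ℝ)).prod
        ((ContinuousLinearMap.fst ℝ ℝ (ℝ × ℝ)).comp
          (ContinuousLinearMap.snd ℝ (EuclideanSpace ℝ (Fin n)) (ℝ × ℝ × ℝ))))
      (x, s, t, y) :=
    (hasFDerivAt_fst).prodMk ((hasFDerivAt_fst).comp (x, s, t, y) (hasFDerivAt_snd))
  have hπ3 : HasFDerivAt (fun w : X => w.2.2.1)
      ((ContinuousLinearMap.fst ℝ ℝ ℝ).comp
        ((ContinuousLinearMap.snd ℝ ℝ (ℝ × ℝ)).comp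
          (ContinuousLinearMap.snd ℝ (EuclideanSpace ℝ (Fin n)) (ℝ × ℝ × ℝ))))
      (x, s, t, y) :=
    (hasFDerivAt_fst).comp (x, s, t, y) ((hasFDerivAt_snd).comp (x, s, t, y) (hasFDerivAt_snd))
  have hπ4 : HasFDerivAt (fun w : X => w.2.2.2)
      ((ContinuousLinearMap.snd ℝ ℝ ℝ).comp
        ((ContinuousLinearMap.snd ℝ ℝ (ℝ × ℝ)).comp
          (ContinuousLinearMap.snd ℝ (EuclideanSpace ℝ (Fin n)) (ℝ × ℝ × ℝ))))
      (x, s, t, y) :=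
    (hasFDerivAt_snd).comp (x, s, t, y) ((hasFDerivAt_snd).comp (x, s, t, y) (hasFDerivAt_snd))
  have hgq : HasFDerivAt g Dg (x, s) :=
    (((eigLift_contDiff ed S a).differentiable one_ne_zero) (x, s)).hasFDerivAt
  have hA : HasFDerivAt (fun w : X => ((g (w.1, w.2.1) : ℝ) : ℂ))
      (Complex.ofRealCLM.comp (Dg.comp
        ((ContinuousLinearMap.fst ℝ (EuclideanSpace ℝ (Fin n)) (ℝ × ℝ × ℝ)).prod
          ((ContinuousLinearMap.fst ℝ ℝ (ℝ × ℝ)).comp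
            (ContinuousLinearMap.snd ℝ (EuclideanSpace ℝ (Fin n)) (ℝ × ℝ × ℝ)))))) (x, s, t, y) :=
    by have := Complex.ofRealCLM.hasFDerivAt.comp (x, s, t, y) (hgq.comp (x, s, t, y) hπ12); exact this
  have hcoe3 : HasFDerivAt (fun w : X => ((w.2.2.1 : ℝ) : ℂ))
      (Complex.ofRealCLM.comp _) (x, s, t, y) :=
    Complex.ofRealCLM.hasFDerivAt.comp (x, s, t, y) hπ3
  have hB : HasFDerivAt (fun w : X => Complex.exp (Complex.I * (2 * (c : ℂ)) * (w.2.2.1 : ℂ)))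
      (Bp • ((Complex.I * (2 * (c : ℂ))) • (Complex.ofRealCLM.comp _))) (x, s, t, y) :=
    (hcoe3.const_mul (Complex.I * (2 * (c : ℂ)))).cexp
  have hτy : HasFDerivAt (fun w : X => τ * w.2.2.2) (τ • _) (x, s, t, y) := hπ4.const_mul τ
  have hexp : HasFDerivAt (fun w : X => Real.exp (τ * w.2.2.2)) (F • (τ • _)) (x, s, t, y) :=
    hτy.exp
  have hC : HasFDerivAt (fun w : X => ((Real.exp (τ * w.2.2.2) : ℝ) : ℂ))
      (Complex.ofRealCLM.comp (F • (τ • _))) (x, s, t, y) :=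
    Complex.ofRealCLM.hasFDerivAt.comp (x, s, t, y) hexp
  have hΦ := (hA.mul hB).mul hC
  have hfd : fderiv ℝ (eigLiftC ed S a K C₀) (x, s, t, y) =
      (((g (x, s) : ℝ) : ℂ) * Bp) • (Complex.ofRealCLM.comp (F • (τ • _))) +
        ((Real.exp (τ * y) : ℝ) : ℂ) •
          ((((g (x, s) : ℝ) : ℂ)) • (Bp • ((Complex.I * (2 * (c : ℂ))) • (Complex.ofRealCLM.comp _))) +
            Bp • (Complex.ofRealCLM.comp (Dg.comp _))) := hΦ.fderiv
  have hDv : ∀ v : X, (fderiv ℝ (eigLiftC ed S a K C₀) (x, s, t, y)) v =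
      (((g (x, s) : ℝ) : ℂ) * Bp) * ((F * (τ * v.2.2.2) : ℝ) : ℂ) +
        ((F : ℝ) : ℂ) * ((((g (x, s) : ℝ) : ℂ)) *
            (Bp * ((Complex.I * (2 * (c : ℂ))) * (v.2.2.1 : ℂ))) +
          Bp * ((Dg (v.1, v.2.1) : ℝ) : ℂ)) := by
    intro v
    rw [hfd]
    simp [ContinuousLinearMap.add_apply, ContinuousLinearMap.smul_apply,
      ContinuousLinearMap.coe_comp', Function.comp, Complex.ofRealCLM_apply,
      ContinuousLinearMap.prod_apply, ContinuousLinearMap.coe_fst',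
      ContinuousLinearMap.coe_snd', smul_eq_mul, Complex.real_smul, hF,
      Complex.ofReal_exp]
    ring
  set D := fderiv ℝ (eigLiftC ed S a K C₀) (x, s, t, y) with hD
  have hsG : 0 ≤ |g (x, s)| := abs_nonneg _
  refine ⟨?_, ?_, ?_⟩
  · -- upper bound
    apply ContinuousLinearMap.opNorm_le_bound _ (by positivity)
    intro v
    rw [hDv v]
    have hv3 : |v.2.2.1| ≤ ‖v‖ := by
      calc |v.2.2.1| = ‖v.2.2.1‖ := (Real.norm_eq_abs _).symm
        _ ≤ ‖v.2.2‖ := norm_fst_le _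
        _ ≤ ‖v.2‖ := norm_snd_le _
        _ ≤ ‖v‖ := norm_snd_le _
    have hv4 : |v.2.2.2| ≤ ‖v‖ := by
      calc |v.2.2.2| = ‖v.2.2.2‖ := (Real.norm_eq_abs _).symm
        _ ≤ ‖v.2.2‖ := norm_snd_le _
        _ ≤ ‖v.2‖ := norm_snd_le _
        _ ≤ ‖v‖ := norm_snd_le _
    have hv12 : ‖(v.1, v.2.1)‖ ≤ ‖v‖ := by
      rw [Prod.norm_def]
      apply max_le (le_trans (norm_fst_le v) le_rfl)
      calc ‖v.2.1‖ ≤ ‖v.2‖ := norm_fst_le _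
        _ ≤ ‖v‖ := norm_snd_le _
    have h1 : ‖(((g (x, s) : ℝ) : ℂ) * Bp) * ((F * (τ * v.2.2.2) : ℝ) : ℂ)‖ ≤
        |g (x, s)| * (F * (τ * ‖v‖)) := by
      rw [norm_mul, norm_mul, hBp1, mul_one, Complex.norm_real, Complex.norm_real,
        Real.norm_eq_abs, Real.norm_eq_abs, abs_mul, abs_mul, abs_of_nonneg hF0.le,
        abs_of_nonneg hτ0]
      gcongr
    have hDgv : |Dg (v.1, v.2.1)| ≤ ‖Dg‖ * ‖v‖ := by
      calc |Dg (v.1, v.2.1)| = ‖Dg (v.1, v.2.1)‖ := (Real.norm_eq_abs _).symm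
        _ ≤ ‖Dg‖ * ‖(v.1, v.2.1)‖ := Dg.le_opNorm _
        _ ≤ ‖Dg‖ * ‖v‖ := by gcongr
    have h2 : ‖((F : ℝ) : ℂ) * ((((g (x, s) : ℝ) : ℂ)) *
            (Bp * ((Complex.I * (2 * (c : ℂ))) * (v.2.2.1 : ℂ))) +
          Bp * ((Dg (v.1, v.2.1) : ℝ) : ℂ))‖ ≤
        F * (|g (x, s)| * (2 * c * ‖v‖) + ‖Dg‖ * ‖v‖) := by
      rw [norm_mul, Complex.norm_real, Real.norm_eq_abs, abs_of_nonneg hF0.le]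
      apply mul_le_mul_of_nonneg_left _ hF0.le
      apply le_trans (norm_add_le _ _)
      apply add_le_add
      · rw [norm_mul, Complex.norm_real, norm_mul, hBp1, one_mul, norm_mul, norm_mul,
          Complex.norm_I, one_mul, Real.norm_eq_abs, Complex.norm_real, Real.norm_eq_abs]
        have h2c : ‖(2 : ℂ)‖ = 2 := by norm_num
        rw [norm_mul, h2c, Complex.norm_real, Real.norm_eq_abs, abs_of_nonneg hc0]
        gcongr
      · rw [norm_mul, hBp1, one_mul, Complex.norm_real, Real.norm_eq_abs]
        exact hDgv
    calc ‖_ + _‖ ≤ _ + _ := norm_add_le _ _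
      _ ≤ |g (x, s)| * (F * (τ * ‖v‖)) + F * (|g (x, s)| * (2 * c * ‖v‖) + ‖Dg‖ * ‖v‖) :=
          add_le_add h1 h2
      _ = ((‖Dg‖ + (2 * c + τ) * |g (x, s)|) * F) * ‖v‖ := by ring
  · -- lower bound for the gradient block
    have key : ∀ w : EuclideanSpace ℝ (Fin n) × ℝ, |Dg w| * F ≤ ‖D‖ * ‖w‖ := by
      intro w
      have e1 : D (w.1, (w.2, ((0 : ℝ), (0 : ℝ)))) = ((F : ℝ) : ℂ) * (Bp * ((Dg w : ℝ) : ℂ)) := by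
        rw [hDv]
        simp
      have hnv : ‖(w.1, (w.2, ((0 : ℝ), (0 : ℝ))))‖ = ‖w‖ := by
        simp [Prod.norm_def]
      calc |Dg w| * F = ‖D (w.1, (w.2, ((0 : ℝ), (0 : ℝ))))‖ := by
            rw [e1, norm_mul, norm_mul, hBp1, one_mul, Complex.norm_real, Complex.norm_real,
              Real.norm_eq_abs, Real.norm_eq_abs, abs_of_nonneg hF0.le]
            ring
        _ ≤ ‖D‖ * ‖(w.1, (w.2, ((0 : ℝ), (0 : ℝ))))‖ := D.le_opNorm _
        _ = ‖D‖ * ‖w‖ := by rw [hnv]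
    have hb : ‖Dg‖ ≤ ‖D‖ / F := by
      apply Dg.opNorm_le_bound (by positivity)
      intro w
      rw [Real.norm_eq_abs, div_mul_eq_mul_div, le_div_iff₀ hF0]
      calc |Dg w| * F ≤ ‖D‖ * ‖w‖ := key w
        _ = ‖D‖ * ‖w‖ := rfl
    exact (le_div_iff₀ hF0).1 hb
  · -- lower bound for the t-derivative block
    have e2 : D ((0 : EuclideanSpace ℝ (Fin n)), ((0 : ℝ), ((1 : ℝ), (0 : ℝ)))) =
        ((F : ℝ) : ℂ) * (((g (x, s) : ℝ) : ℂ) * (Bp * (Complex.I * (2 * (c : ℂ))))) := by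
      rw [hDv]
      simp [Prod.mk_zero_zero]
    have hnv : ‖((0 : EuclideanSpace ℝ (Fin n)), ((0 : ℝ), ((1 : ℝ), (0 : ℝ))))‖ = 1 := by
      simp [Prod.norm_def]
    calc 2 * c * |g (x, s)| * F = ‖D ((0 : EuclideanSpace ℝ (Fin n)), ((0:ℝ), ((1:ℝ), (0:ℝ))))‖ := by
          rw [e2, norm_mul, norm_mul, norm_mul, hBp1, one_mul, norm_mul, Complex.norm_I,
            one_mul, Complex.norm_real, Complex.norm_real, Real.norm_eq_abs, Real.norm_eq_abs,
            abs_of_nonneg hF0.le, norm_mul, Complex.norm_real, Real.norm_eq_abs,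
            abs_of_nonneg hc0]
          have h2c : ‖(2 : ℂ)‖ = 2 := by norm_num
          rw [h2c]
          ring
      _ ≤ ‖D‖ * ‖((0 : EuclideanSpace ℝ (Fin n)), ((0:ℝ), ((1:ℝ), (0:ℝ))))‖ := D.le_opNorm _
      _ = ‖D‖ := by rw [hnv, mul_one]

lemma volume_Ioo_prod_toReal (r : ℝ) (hr : 0 < r) :
    (volume ((Set.Ioo (-r) r ×ˢ Set.Ioo (-r) r) : Set (ℝ × ℝ))).toReal = (2 * r) * (2 * r) := by
  rw [Measure.volume_eq_prod, Measure.prod_prod, Real.volume_Ioo, ENNReal.toReal_mul,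
    ENNReal.toReal_ofReal (by linarith)]
  norm_num
  ring

lemma fubini_cube {n : ℕ} (A : Set (EuclideanSpace ℝ (Fin n))) (hA : MeasurableSet A)
    (hAb : Bornology.IsBounded A) (r : ℝ) (hr : 0 < r)
    (f : EuclideanSpace ℝ (Fin n) × ℝ → ℝ) (hf : Continuous f) :
    (∫ p in (A ×ˢ (Set.Ioo (-r) r ×ˢ (Set.Ioo (-r) r ×ˢ Set.Ioo (-r) r)) :
        Set (EuclideanSpace ℝ (Fin n) × ℝ × ℝ × ℝ)), f (p.1, p.2.1)) =
      (2 * r) * (2 * r) * ∫ q in A ×ˢ Set.Ioo (-r) r, f q := by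
  set I := Set.Ioo (-r) r with hI
  have hIb : Bornology.IsBounded I := Metric.isBounded_Ioo _ _
  have hint : Integrable (fun p : EuclideanSpace ℝ (Fin n) × ℝ × ℝ × ℝ => f (p.1, p.2.1))
      ((volume.restrict A).prod (volume.restrict (I ×ˢ (I ×ˢ I)))) := by
    rw [Measure.prod_restrict, ← Measure.volume_eq_prod]
    exact contIntegrableOn (hf.comp (continuous_fst.prodMk (continuous_fst.comp
      continuous_snd))) (hAb.prod (hIb.prod (hIb.prod hIb)))
  have hxint : ∀ x : EuclideanSpace ℝ (Fin n),
      Integrable (fun z : ℝ × ℝ × ℝ => f (x, z.1))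
        ((volume.restrict I).prod (volume.restrict (I ×ˢ I))) := by
    intro x
    rw [Measure.prod_restrict, ← Measure.volume_eq_prod]
    exact contIntegrableOn (hf.comp (continuous_const.prodMk continuous_fst))
      (hIb.prod (hIb.prod hIb))
  have hf2 : Integrable f ((volume.restrict A).prod (volume.restrict I)) := by
    rw [Measure.prod_restrict, ← Measure.volume_eq_prod]
    exact contIntegrableOn hf (hAb.prod hIb)
  have hinner : ∀ x : EuclideanSpace ℝ (Fin n),
      (∫ z in (I ×ˢ (I ×ˢ I) : Set (ℝ × ℝ × ℝ)), f (x, z.1)) =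
        (2 * r) * (2 * r) * ∫ u in I, f (x, u) := by
    intro x
    calc (∫ z in (I ×ˢ (I ×ˢ I) : Set (ℝ × ℝ × ℝ)), f (x, z.1)) =
        ∫ z, f (x, z.1) ∂((volume.restrict I).prod (volume.restrict (I ×ˢ I))) := by
          rw [Measure.prod_restrict, ← Measure.volume_eq_prod]
      _ = ∫ u in I, (∫ w in (I ×ˢ I : Set (ℝ × ℝ)), f (x, u)) := integral_prod _ (hxint x)
      _ = ∫ u in I, ((volume ((I ×ˢ I) : Set (ℝ × ℝ))).toReal • f (x, u)) := by
          simp [integral_const, Measure.restrict_apply_univ, measureReal_def]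
      _ = (volume ((I ×ˢ I) : Set (ℝ × ℝ))).toReal • ∫ u in I, f (x, u) := integral_smul _ _
      _ = (2 * r) * (2 * r) * ∫ u in I, f (x, u) := by
          rw [volume_Ioo_prod_toReal r hr, smul_eq_mul]
  calc (∫ p in (A ×ˢ (I ×ˢ (I ×ˢ I)) : Set (EuclideanSpace ℝ (Fin n) × ℝ × ℝ × ℝ)),
        f (p.1, p.2.1)) =
      ∫ p, f (p.1, p.2.1) ∂((volume.restrict A).prod (volume.restrict (I ×ˢ (I ×ˢ I)))) := by
        rw [Measure.prod_restrict, ← Measure.volume_eq_prod]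
    _ = ∫ x in A, (∫ z in (I ×ˢ (I ×ˢ I) : Set (ℝ × ℝ × ℝ)), f (x, z.1)) :=
        integral_prod _ hint
    _ = ∫ x in A, ((2 * r) * (2 * r) * ∫ u in I, f (x, u)) := by
        simp only [hinner]
    _ = (2 * r) * (2 * r) * ∫ x in A, ∫ u in I, f (x, u) := integral_const_mul _ _
    _ = (2 * r) * (2 * r) * ∫ q in A ×ˢ I, f q := by
        congr 1
        rw [show (∫ q in (A ×ˢ I : Set (EuclideanSpace ℝ (Fin n) × ℝ)), f q) =
            ∫ q, f q ∂((volume.restrict A).prod (volume.restrict I)) by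
          rw [Measure.prod_restrict, ← Measure.volume_eq_prod]]
        exact (integral_prod _ hf2).symm

end AuxSmooth

set_option maxHeartbeats 2000000 in
/-- estimates (recall-1) and (recall-1-1) of the paper: with
`τ₀ = √(5C₀ + 4K)`, the squared `L²` norm of `∇Φ` on `4Q_j × (−4ρ,4ρ)³` is bounded
by `Cρ²(5C₀ + 8K)e^{8τ₀ρ} ‖Φ̂‖²_{H¹(4Q_j × (−4ρ,4ρ))}`, and from below on
`Q_j × (−ρ,ρ)³` by `C′ρ² e^{−2τ₀ρ} ‖Φ̂‖²_{H¹(Q_j × (−ρ,ρ))}`. -/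
theorem lifted_complex_gradient_comparison {n : ℕ} (hn : 1 ≤ n) :
    ∃ C C' : ℝ, 0 < C ∧ 0 < C' ∧
    ∀ (V : EuclideanSpace ℝ (Fin n) → ℝ) (c₁ C0 β₁ c₂ β₂ : ℝ),
      AssumptionA V 20 c₁ C0 β₁ c₂ β₂ →
    ∀ (C₀ : ℝ), 0 < C₀ → (∀ x, -C₀ + 1 ≤ V x) →
    ∀ (ω : Set (EuclideanSpace ℝ (Fin n))), IsOpen ω → ω.Nonempty →
      Bornology.IsBounded ω → ω ⊆ (Metric.ball (0 : EuclideanSpace ℝ (Fin n)) 20)ᶜ →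
    ∀ (K : ℝ), K = (⨆ x ∈ ω, (|V x| + ‖fderiv ℝ V x‖)) →
    ∀ (ed : EigenData n V) (S : Finset ℕ) (a : ℕ → ℝ)
      (j : Fin n → ℤ) (ρ : ℝ), 0 < ρ → ρ < 1 →
      (∫ p in (cubeJ j 4 ×ˢ (Set.Ioo (-(4*ρ)) (4*ρ) ×ˢ
            (Set.Ioo (-(4*ρ)) (4*ρ) ×ˢ Set.Ioo (-(4*ρ)) (4*ρ))) :
            Set (EuclideanSpace ℝ (Fin n) × ℝ × ℝ × ℝ)),
          ‖fderiv ℝ (eigLiftC ed S a K C₀) p‖ ^ 2) ≤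
        C * ρ ^ 2 * (5 * C₀ + 8 * K) *
          Real.exp (8 * Real.sqrt (5 * C₀ + 4 * K) * ρ) *
          h1sq (cubeJ j 4 ×ˢ Set.Ioo (-(4*ρ)) (4*ρ)) (eigLift ed S a) ∧
      C' * ρ ^ 2 * Real.exp (-(2 * Real.sqrt (5 * C₀ + 4 * K) * ρ)) *
          h1sq (cubeJ j 1 ×ˢ Set.Ioo (-ρ) ρ) (eigLift ed S a) ≤
        (∫ p in (cubeJ j 1 ×ˢ (Set.Ioo (-ρ) ρ ×ˢ
            (Set.Ioo (-ρ) ρ ×ˢ Set.Ioo (-ρ) ρ)) :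
            Set (EuclideanSpace ℝ (Fin n) × ℝ × ℝ × ℝ)),
          ‖fderiv ℝ (eigLiftC ed S a K C₀) p‖ ^ 2) := by
  refine ⟨512, 1, by norm_num, one_pos, ?_⟩
  intro V c₁ C0 β₁ c₂ β₂ hAs C₀ hC₀ hVlow ω hωopen hωne hωbdd hω20 K hKdef ed S a j ρ hρ hρ1
  have hβ₂0 : (0 : ℝ) ≤ β₂ := le_trans hAs.hβ₁.le hAs.hβ₁₂
  obtain ⟨x₀, hx₀⟩ := hωne
  obtain ⟨Rb, hRb⟩ := isBounded_iff_forall_norm_le.1 hωbdd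
  have hBdd : BddAbove (Set.range fun x => ⨆ _ : x ∈ ω, (|V x| + ‖fderiv ℝ V x‖)) := by
    refine ⟨c₂ * (|Rb| + 1) ^ β₂, ?_⟩
    rintro v ⟨x, rfl⟩
    show (⨆ _ : x ∈ ω, (|V x| + ‖fderiv ℝ V x‖)) ≤ c₂ * (|Rb| + 1) ^ β₂
    by_cases hx : x ∈ ω
    · rw [ciSup_pos hx]
      refine le_trans (hAs.upper x) ?_
      have h1 : ‖x‖ + 1 ≤ |Rb| + 1 := by
        have := hRb x hx; have := le_abs_self Rb; linarith
      exact mul_le_mul_of_nonneg_left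
        (Real.rpow_le_rpow (by positivity) h1 hβ₂0) hAs.hc₂.le
    · have : IsEmpty (x ∈ ω) := ⟨fun h => hx h⟩
      rw [Real.iSup_of_isEmpty]
      exact mul_nonneg hAs.hc₂.le (Real.rpow_nonneg (by positivity) _)
  have hK0 : 0 ≤ K := hKdef ▸ Real.iSup_nonneg fun x => Real.iSup_nonneg fun _ => by positivity
  have hK1 : 1 ≤ K + C₀ := by
    have h1 : |V x₀| + ‖fderiv ℝ V x₀‖ ≤ K := by
      rw [hKdef]
      exact le_trans (le_ciSup (f := fun _ : x₀ ∈ ω => |V x₀| + ‖fderiv ℝ V x₀‖)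
        (Set.Finite.bddAbove (Set.finite_range _)) hx₀) (le_ciSup hBdd x₀)
    have h2 := hVlow x₀
    have h3 := le_abs_self (V x₀)
    have h4 := norm_nonneg (fderiv ℝ V x₀)
    linarith
  set c : ℝ := Real.sqrt (K + C₀) with hcdef
  set τ : ℝ := Real.sqrt (5 * C₀ + 4 * K) with hτdef
  set M : ℝ := 5 * C₀ + 8 * K with hMdef
  have hc0 : 0 ≤ c := Real.sqrt_nonneg _
  have hτ0 : 0 ≤ τ := Real.sqrt_nonneg _
  have hcsq : c ^ 2 = K + C₀ := Real.sq_sqrt (by linarith)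
  have hτsq : τ ^ 2 = 5 * C₀ + 4 * K := Real.sq_sqrt (by linarith)
  have hc1 : 1 ≤ c := by
    rw [hcdef, show (1 : ℝ) = Real.sqrt 1 from Real.sqrt_one.symm]
    exact Real.sqrt_le_sqrt hK1
  have hM5 : 5 ≤ M := by rw [hMdef]; linarith
  set g := eigLift ed S a with hgdef
  set Φ := eigLiftC ed S a K C₀ with hΦdef
  set H : EuclideanSpace ℝ (Fin n) × ℝ → ℝ :=
    fun q => (g q) ^ 2 + ‖fderiv ℝ g q‖ ^ 2 with hHdef
  have hgc : Continuous g := (eigLift_contDiff ed S a).continuous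
  have hgd : Continuous (fderiv ℝ g) := (eigLift_contDiff ed S a).continuous_fderiv one_ne_zero
  have hH : Continuous H := (hgc.pow 2).add (hgd.norm.pow 2)
  have hΦn : Continuous fun p => ‖fderiv ℝ Φ p‖ ^ 2 :=
    (((eigLiftC_contDiff ed S a K C₀).continuous_fderiv one_ne_zero).norm.pow 2)
  have hHproj : Continuous fun p : EuclideanSpace ℝ (Fin n) × ℝ × ℝ × ℝ => H (p.1, p.2.1) :=
    hH.comp (continuous_fst.prodMk (continuous_fst.comp continuous_snd))
  have key := eigLiftC_fderiv_bounds ed S a K C₀ (by linarith) (by linarith)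
  constructor
  · -- upper bound
    set A4 := cubeJ j 4 with hA4
    set I4 := Set.Ioo (-(4 * ρ)) (4 * ρ) with hI4
    set set4 := (A4 ×ˢ (I4 ×ˢ (I4 ×ˢ I4)) :
      Set (EuclideanSpace ℝ (Fin n) × ℝ × ℝ × ℝ)) with hset4
    have hmeas4 : MeasurableSet set4 :=
      (cubeJ_isOpen j 4).measurableSet.prod (measurableSet_Ioo.prod
        (measurableSet_Ioo.prod measurableSet_Ioo))
    have hbdd4 : Bornology.IsBounded set4 :=
      (cubeJ_bounded j 4).prod ((Metric.isBounded_Ioo _ _).prod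
        ((Metric.isBounded_Ioo _ _).prod (Metric.isBounded_Ioo _ _)))
    have hup : ∀ p ∈ set4, ‖fderiv ℝ Φ p‖ ^ 2 ≤
        8 * M * Real.exp (8 * τ * ρ) * H (p.1, p.2.1) := by
      intro p hp
      obtain ⟨hup1, -, -⟩ := key p
      set sN := ‖fderiv ℝ g (p.1, p.2.1)‖ with hsN
      set G := |g (p.1, p.2.1)| with hG
      set F := Real.exp (τ * p.2.2.2) with hFd
      have hG0 : 0 ≤ G := abs_nonneg _
      have hsN0 : 0 ≤ sN := norm_nonneg _
      have hF0 : 0 < F := Real.exp_pos _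
      have hy : p.2.2.2 < 4 * ρ := hp.2.2.2.2
      have hF2 : F ^ 2 ≤ Real.exp (8 * τ * ρ) := by
        rw [sq, hFd, ← Real.exp_add]
        apply Real.exp_le_exp.2
        nlinarith [mul_le_mul_of_nonneg_left hy.le hτ0]
      have ha2 : (2 * c + τ) ^ 2 ≤ 4 * M := by nlinarith [sq_nonneg (2 * c - τ)]
      have h1 : (sN + (2 * c + τ) * G) ^ 2 ≤ 2 * sN ^ 2 + 2 * ((2 * c + τ) ^ 2) * G ^ 2 := by
        nlinarith [sq_nonneg (sN - (2 * c + τ) * G)]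
      have h2 : ((2 * c + τ) ^ 2) * G ^ 2 ≤ 4 * M * G ^ 2 :=
        mul_le_mul_of_nonneg_right ha2 (sq_nonneg G)
      have h3 : (sN + (2 * c + τ) * G) ^ 2 ≤ 8 * M * (G ^ 2 + sN ^ 2) := by nlinarith
      have hHq : H (p.1, p.2.1) = G ^ 2 + sN ^ 2 := by rw [hHdef]; simp [hG, hsN, sq_abs]
      calc ‖fderiv ℝ Φ p‖ ^ 2 ≤ ((sN + (2 * c + τ) * G) * F) ^ 2 :=
            pow_le_pow_left₀ (norm_nonneg _) hup1 2
        _ = (sN + (2 * c + τ) * G) ^ 2 * F ^ 2 := by ring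
        _ ≤ (8 * M * (G ^ 2 + sN ^ 2)) * Real.exp (8 * τ * ρ) := by
            apply mul_le_mul h3 hF2 (sq_nonneg F) (by nlinarith)
        _ = 8 * M * Real.exp (8 * τ * ρ) * H (p.1, p.2.1) := by rw [hHq]; ring
    have hint1 : IntegrableOn (fun p => ‖fderiv ℝ Φ p‖ ^ 2) set4 volume :=
      contIntegrableOn hΦn hbdd4
    have hint2 : IntegrableOn
        (fun p : EuclideanSpace ℝ (Fin n) × ℝ × ℝ × ℝ =>
          8 * M * Real.exp (8 * τ * ρ) * H (p.1, p.2.1)) set4 volume :=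
      contIntegrableOn (continuous_const.mul hHproj) hbdd4
    calc (∫ p in set4, ‖fderiv ℝ Φ p‖ ^ 2) ≤
        ∫ p in set4, 8 * M * Real.exp (8 * τ * ρ) * H (p.1, p.2.1) :=
          setIntegral_mono_on hint1 hint2 hmeas4 hup
      _ = 8 * M * Real.exp (8 * τ * ρ) * ∫ p in set4, H (p.1, p.2.1) :=
          integral_const_mul _ _
      _ = 8 * M * Real.exp (8 * τ * ρ) *
          ((2 * (4 * ρ)) * (2 * (4 * ρ)) * ∫ q in A4 ×ˢ I4, H q) := by
          rw [fubini_cube A4 (cubeJ_isOpen j 4).measurableSet (cubeJ_bounded j 4)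
            (4 * ρ) (by linarith) H hH]
      _ = 512 * ρ ^ 2 * M * Real.exp (8 * τ * ρ) * h1sq (A4 ×ˢ I4) g := by
          rw [show h1sq (A4 ×ˢ I4) g = ∫ q in A4 ×ˢ I4, H q from rfl]
          ring
  · -- lower bound
    set A1 := cubeJ j 1 with hA1
    set I1 := Set.Ioo (-ρ) ρ with hI1
    set set1 := (A1 ×ˢ (I1 ×ˢ (I1 ×ˢ I1)) :
      Set (EuclideanSpace ℝ (Fin n) × ℝ × ℝ × ℝ)) with hset1
    have hmeas1 : MeasurableSet set1 :=
      (cubeJ_isOpen j 1).measurableSet.prod (measurableSet_Ioo.prod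
        (measurableSet_Ioo.prod measurableSet_Ioo))
    have hbdd1 : Bornology.IsBounded set1 :=
      (cubeJ_bounded j 1).prod ((Metric.isBounded_Ioo _ _).prod
        ((Metric.isBounded_Ioo _ _).prod (Metric.isBounded_Ioo _ _)))
    have hlow : ∀ p ∈ set1, (1 / 2) * Real.exp (-(2 * τ * ρ)) * H (p.1, p.2.1) ≤
        ‖fderiv ℝ Φ p‖ ^ 2 := by
      intro p hp
      obtain ⟨-, hlow1, hlow2⟩ := key p
      set sN := ‖fderiv ℝ g (p.1, p.2.1)‖ with hsN
      set G := |g (p.1, p.2.1)| with hG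
      set F := Real.exp (τ * p.2.2.2) with hFd
      set N := ‖fderiv ℝ Φ p‖ with hN
      have hG0 : 0 ≤ G := abs_nonneg _
      have hsN0 : 0 ≤ sN := norm_nonneg _
      have hF0 : 0 < F := Real.exp_pos _
      have hy : -ρ < p.2.2.2 := hp.2.2.2.1
      have hF2 : Real.exp (-(2 * τ * ρ)) ≤ F ^ 2 := by
        rw [sq, hFd, ← Real.exp_add]
        apply Real.exp_le_exp.2
        nlinarith [mul_le_mul_of_nonneg_left hy.le hτ0]
      have hN1 : (sN * F) ^ 2 ≤ N ^ 2 := pow_le_pow_left₀ (by positivity) hlow1 2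
      have hN2 : (2 * c * G * F) ^ 2 ≤ N ^ 2 := pow_le_pow_left₀ (by positivity) hlow2 2
      have e1 : Real.exp (-(2 * τ * ρ)) * (G ^ 2 + sN ^ 2) ≤ F ^ 2 * (G ^ 2 + sN ^ 2) :=
        mul_le_mul_of_nonneg_right hF2 (by positivity)
      have e3 : (G * F) ^ 2 ≤ (2 * c * G * F) ^ 2 := by nlinarith [sq_nonneg (G * F)]
      have hHq : H (p.1, p.2.1) = G ^ 2 + sN ^ 2 := by rw [hHdef]; simp [hG, hsN, sq_abs]
      rw [hHq]
      nlinarith [hN1, hN2, e1, e3]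
    have hint1 : IntegrableOn (fun p => ‖fderiv ℝ Φ p‖ ^ 2) set1 volume :=
      contIntegrableOn hΦn hbdd1
    have hint2 : IntegrableOn
        (fun p : EuclideanSpace ℝ (Fin n) × ℝ × ℝ × ℝ =>
          (1 / 2) * Real.exp (-(2 * τ * ρ)) * H (p.1, p.2.1)) set1 volume :=
      contIntegrableOn (continuous_const.mul hHproj) hbdd1
    have h1sq_nonneg : 0 ≤ h1sq (A1 ×ˢ I1) g := by
      apply setIntegral_nonneg
        (((cubeJ_isOpen j 1).measurableSet).prod measurableSet_Ioo)
      intro q _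
      positivity
    calc 1 * ρ ^ 2 * Real.exp (-(2 * τ * ρ)) * h1sq (A1 ×ˢ I1) g
        ≤ 2 * ρ ^ 2 * Real.exp (-(2 * τ * ρ)) * h1sq (A1 ×ˢ I1) g := by
          have he : 0 < Real.exp (-(2 * τ * ρ)) := Real.exp_pos _
          have h0 : 0 ≤ ρ ^ 2 * Real.exp (-(2 * τ * ρ)) * h1sq (A1 ×ˢ I1) g :=
            mul_nonneg (mul_nonneg (sq_nonneg ρ) he.le) h1sq_nonneg
          linarith
      _ = (1 / 2) * Real.exp (-(2 * τ * ρ)) * ((2 * ρ) * (2 * ρ) * h1sq (A1 ×ˢ I1) g) := by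
          ring
      _ = ∫ p in set1, (1 / 2) * Real.exp (-(2 * τ * ρ)) * H (p.1, p.2.1) := by
          rw [integral_const_mul, fubini_cube A1 (cubeJ_isOpen j 1).measurableSet
            (cubeJ_bounded j 1) ρ hρ H hH,
            show h1sq (A1 ×ˢ I1) g = ∫ q in A1 ×ˢ I1, H q from rfl]
      _ ≤ ∫ p in set1, ‖fderiv ℝ Φ p‖ ^ 2 :=
          setIntegral_mono_on hint2 hint1 hmeas1 hlow
end
end

section
/- Let T > 0, let J ⊂ (0, T) be a measurable set of positive Lebesgue measure, and let k ∈ (0, T) be a Lebesgue density point of J. Then for every α > 1 there exists k₁ ∈ (k, T) such that the sequence (k_m)_{m ≥ 1} defined by k_{m+1} − k = α^{−m}(k₁ − k) satisfies |J ∩ (k_{m+1}, k_m)| ≥ (k_m − k_{m+1})/3 for all m ≥ 1. -/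
open MeasureTheory Set Filter Topology

/-- Let `J ⊂ (0, T)` have positive measure and let `k` be a Lebesgue
density point of `J`.  For every `α > 1` there is `k₁ ∈ (k, T)` such that the sequence
`k_m = k + α^{1−m}(k₁ − k)` (i.e. `k_{m+1} − k = α^{−m}(k₁ − k)`) satisfies
`|J ∩ (k_{m+1}, k_m)| ≥ (k_m − k_{m+1})/3` for all `m ≥ 1`. -/
theorem density_point_telescoping (T : ℝ) (hT : 0 < T) (J : Set ℝ)
    (hJmeas : MeasurableSet J) (hJT : J ⊆ Set.Ioo 0 T) (hJpos : 0 < volume J)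
    (k : ℝ) (hk : k ∈ Set.Ioo 0 T)
    (hdens : Tendsto
      (fun r : ℝ => volume (J ∩ Set.Ioo (k - r) (k + r)) / ENNReal.ofReal (2 * r))
      (𝓝[>] (0 : ℝ)) (𝓝 1)) :
    ∀ α : ℝ, 1 < α → ∃ k₁ ∈ Set.Ioo k T, ∀ m : ℕ, 1 ≤ m →
      ENNReal.ofReal
          (((k + (k₁ - k) * α ^ (1 - (m : ℤ))) -
            (k + (k₁ - k) * α ^ (1 - ((m : ℤ) + 1)))) / 3) ≤
        volume (J ∩ Set.Ioo (k + (k₁ - k) * α ^ (1 - ((m : ℤ) + 1)))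
          (k + (k₁ - k) * α ^ (1 - (m : ℤ)))) := by
  intro α hα
  have hα0 : (0:ℝ) < α := one_pos.trans hα
  have h1α : 1/α < 1 := (div_lt_one hα0).mpr hα
  have h1α0 : 0 < 1/α := by positivity
  set ε : ℝ := (1 - 1/α)/3 with hεdef
  have hε0 : 0 < ε := by rw [hεdef]; linarith
  have hε1 : ε < 1 := by rw [hεdef]; linarith
  have hlt : ENNReal.ofReal (1 - ε) < 1 := by
    rw [ENNReal.ofReal_lt_one]; linarith
  have hev : ∀ᶠ r in 𝓝[>] (0:ℝ),
      ENNReal.ofReal (1 - ε) ≤ volume (J ∩ Set.Ioo (k - r) (k + r)) / ENNReal.ofReal (2 * r) :=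
    hdens.eventually (eventually_ge_nhds hlt)
  rw [eventually_iff, mem_nhdsGT_iff_exists_Ioo_subset] at hev
  obtain ⟨u, hu, hsub⟩ := hev
  have hu0 : (0:ℝ) < u := hu
  have hTk : 0 < T - k := sub_pos.mpr hk.2
  set d : ℝ := min (u/2) ((T-k)/2) with hddef
  have hd0 : 0 < d := lt_min (by positivity) (by positivity)
  have hdu : d ≤ u/2 := min_le_left _ _
  have hdT : d ≤ (T-k)/2 := min_le_right _ _
  refine ⟨k + d, ⟨by linarith, by linarith⟩, ?_⟩
  intro m hm
  set r : ℝ := d * α ^ (1 - (m:ℤ)) with hrdef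
  have hz0 : (0:ℝ) < α ^ (1 - (m:ℤ)) := zpow_pos hα0 _
  have hmz : (1 - (m:ℤ)) ≤ 0 := by omega
  have hzle : α ^ (1 - (m:ℤ)) ≤ 1 := zpow_le_one_of_nonpos₀ hα.le hmz
  have hr0 : 0 < r := mul_pos hd0 hz0
  have hrd : r ≤ d := mul_le_of_le_one_right hd0.le hzle
  have hru : r < u := by linarith
  have hP := hsub ⟨hr0, hru⟩
  simp only [Set.mem_setOf_eq] at hP
  have h2r0 : (0:ℝ) < 2*r := by linarith
  have h2rne : ENNReal.ofReal (2*r) ≠ 0 := by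
    simp [ENNReal.ofReal_eq_zero]; linarith
  have hvol1 : ENNReal.ofReal ((1-ε)*(2*r)) ≤ volume (J ∩ Set.Ioo (k-r) (k+r)) := by
    rw [ENNReal.ofReal_mul (by linarith)]
    rw [ENNReal.le_div_iff_mul_le (Or.inl h2rne) (Or.inl ENNReal.ofReal_ne_top)] at hP
    exact hP
  have hnext : (k + d - k) * α ^ (1 - ((m:ℤ)+1)) = r * α⁻¹ := by
    rw [add_sub_cancel_left,
      show (1 - ((m:ℤ)+1)) = (1 - (m:ℤ)) + (-1) by ring,
      zpow_add₀ (ne_of_gt hα0), zpow_neg_one, hrdef]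
    ring
  have hcur : (k + d - k) * α ^ (1 - (m:ℤ)) = r := by rw [add_sub_cancel_left]
  rw [hnext, hcur]
  have hinv1 : α⁻¹ ≤ 1 := by
    rw [← one_div]; exact h1α.le
  have hrα : r * α⁻¹ ≤ r := mul_le_of_le_one_right hr0.le hinv1
  have hsubset : J ∩ Set.Ioo (k - r) (k + r) ⊆
      (J ∩ Set.Ioo (k + r*α⁻¹) (k + r)) ∪ Set.Ioc (k - r) (k + r*α⁻¹) := by
    intro x hx
    rcases le_or_gt x (k + r*α⁻¹) with h | h
    · exact Or.inr ⟨hx.2.1, h⟩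
    · exact Or.inl ⟨hx.1, h, hx.2.2⟩
  have hvol2 : volume (J ∩ Set.Ioo (k-r) (k+r)) ≤
      volume (J ∩ Set.Ioo (k + r*α⁻¹) (k + r)) + ENNReal.ofReal (r + r*α⁻¹) := by
    calc volume (J ∩ Set.Ioo (k-r) (k+r))
        ≤ volume ((J ∩ Set.Ioo (k + r*α⁻¹) (k + r)) ∪ Set.Ioc (k - r) (k + r*α⁻¹)) :=
          measure_mono hsubset
      _ ≤ volume (J ∩ Set.Ioo (k + r*α⁻¹) (k + r)) + volume (Set.Ioc (k - r) (k + r*α⁻¹)) :=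
          measure_union_le _ _
      _ = volume (J ∩ Set.Ioo (k + r*α⁻¹) (k + r)) + ENNReal.ofReal (r + r*α⁻¹) := by
          rw [Real.volume_Ioc]
          congr 2
          ring
  have hfin : ENNReal.ofReal (r + r*α⁻¹) ≠ ⊤ := ENNReal.ofReal_ne_top
  rw [show ((k + r) - (k + r*α⁻¹))/3 = (r - r*α⁻¹)/3 by ring,
    ← ENNReal.add_le_add_iff_right hfin]
  have hinv0 : (0:ℝ) < α⁻¹ := inv_pos.mpr hα0
  calc ENNReal.ofReal ((r - r*α⁻¹)/3) + ENNReal.ofReal (r + r*α⁻¹)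
      = ENNReal.ofReal ((r - r*α⁻¹)/3 + (r + r*α⁻¹)) := by
        rw [← ENNReal.ofReal_add (by linarith) (by nlinarith)]
    _ = ENNReal.ofReal ((1-ε)*(2*r)) := by
        congr 1
        rw [hεdef]
        field_simp
        ring
    _ ≤ volume (J ∩ Set.Ioo (k-r) (k+r)) := hvol1
    _ ≤ _ := hvol2
end
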